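/- There is no function f : ℕ → ℝ with f(d) > 1 for all d ≥ 3 such that every Cayley graph of valency d has the property that every induced subgraph on more than half its vertices has maximum degree at least f(d); in particular, for each d of the form produced by the iterated wreath construction, there is a d-valent Cayley graph with an induced subgraph of maximum degree 1 on more than half its vertices. -/

import Mathlib

/-- The Cayley graph of a group `G` with connection set `S`. -/
def cayley (G : Type*) [Group G] (S : Set G) : SimpleGraph G :=
  SimpleGraph.fromRel (fun g h => g⁻¹ * h ∈ S)

/-- The wreath product `Z₂ ≀ G`: pairs `(a, g)` with `a : G → ZMod 2` and `g ∈ G`,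
with multiplication `(a, g)(b, h) = (a + b^g, g h)` where `b^g(x) = b(g⁻¹ x)`. -/
structure Wr (G : Type*) where
  a : G → ZMod 2
  g : G

namespace Wr
variable {G : Type*} [Group G]

instance : Mul (Wr G) := ⟨fun x y => ⟨x.a + fun t => y.a (x.g⁻¹ * t), x.g * y.g⟩⟩
instance : One (Wr G) := ⟨⟨0, 1⟩⟩
instance : Inv (Wr G) := ⟨fun x => ⟨fun t => x.a (x.g * t), x.g⁻¹⟩⟩

theorem mul_def (x y : Wr G) :
    x * y = ⟨x.a + fun t => y.a (x.g⁻¹ * t), x.g * y.g⟩ := rfl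
theorem one_def : (1 : Wr G) = ⟨0, 1⟩ := rfl
theorem inv_def (x : Wr G) : x⁻¹ = ⟨fun t => x.a (x.g * t), x.g⁻¹⟩ := rfl

instance : Group (Wr G) where
  mul_assoc x y z := by
    simp only [mul_def]
    congr 1
    · funext t
      simp [add_assoc, mul_inv_rev, mul_assoc]
    · exact mul_assoc _ _ _
  one_mul x := by
    cases x with
    | mk a g =>
      simp only [mul_def, one_def]
      congr 1
      · funext t; simp
      · exact one_mul g
  mul_one x := by
    cases x with
    | mk a g =>
      simp only [mul_def, one_def]
      congr 1
      · funext t; simp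
      · exact mul_one g
  inv_mul_cancel x := by
    cases x with
    | mk a g =>
      simp only [mul_def, inv_def, one_def]
      congr 1
      · funext t
        have h2 : ∀ z : ZMod 2, z + z = 0 := by decide
        simp [h2]
      · exact inv_mul_cancel g

end Wr

/-- The generator `(a₁, 1)` of the wreath product, where `a₁` is the indicator
function of `{1}`. -/
def wgen (G : Type*) [Group G] [DecidableEq G] : Wr G :=
  ⟨fun t => if t = 1 then 1 else 0, 1⟩

/-- The canonical generating set `Ŝ = {(a₁, 1)} ∪ {(0, s) : s ∈ S}` of `Z₂ ≀ G`. -/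
def wS {G : Type*} [Group G] [DecidableEq G] (S : Set G) : Set (Wr G) :=
  insert (wgen G) ((fun s => Wr.mk 0 s) '' S)

/-!
The bound already fails for valency 3. In the dihedral group `D₉` we have `r i * sr j = sr (j - i)`,
so in the Cayley graph on the reflections `sr 0, sr 1, sr 3` the rotation `r i` is adjacent to
`sr (-i)`, `sr (1 - i)` and `sr (3 - i)`. For `I = {0, 2, 5, 6, 8}` exactly one of `-i, 1 - i, 3 - i`
lies in `I` whenever `i ∈ I`, so the ten vertices `r i, sr i` with `i ∈ I` — more than half of the
eighteen — induce a perfect matching.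
-/

theorem cayley_adj_iff {G : Type*} [Group G] {S : Set G} (hS : ∀ s ∈ S, s⁻¹ ∈ S)
    (hS₁ : (1 : G) ∉ S) {g h : G} : (cayley G S).Adj g h ↔ g⁻¹ * h ∈ S := by
  rw [cayley, SimpleGraph.fromRel_adj]
  constructor
  · rintro ⟨-, hgh | hhg⟩
    · exact hgh
    · simpa using hS _ hhg
  · intro hgh
    refine ⟨?_, Or.inl hgh⟩
    rintro rfl
    exact hS₁ (by simpa using hgh)

theorem DihedralGroup.closure_sr_zero_sr_one (n : ℕ) :
    Subgroup.closure {DihedralGroup.sr 0, DihedralGroup.sr 1} =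
      (⊤ : Subgroup (DihedralGroup n)) := by
  rw [eq_top_iff]
  rintro x -
  set C := Subgroup.closure {DihedralGroup.sr 0, DihedralGroup.sr (1 : ZMod n)}
  have hsr₀ : DihedralGroup.sr 0 ∈ C := Subgroup.subset_closure (by simp)
  have hsr₁ : DihedralGroup.sr 1 ∈ C := Subgroup.subset_closure (by simp)
  have hr : ∀ i : ZMod n, DihedralGroup.r i ∈ C := by
    intro i
    have hr₁ : DihedralGroup.r 1 ∈ C := by
      simpa [DihedralGroup.sr_mul_sr] using mul_mem hsr₀ hsr₁
    simpa [DihedralGroup.r_one_zpow, ZMod.intCast_zmod_cast] using zpow_mem hr₁ (ZMod.cast i : ℤ)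
  cases x with
  | r i => exact hr i
  | sr i => simpa [DihedralGroup.sr_mul_r] using mul_mem hsr₀ (hr i)

namespace CayleyCounterexample

open DihedralGroup

def S : Finset (DihedralGroup 9) := {sr 0, sr 1, sr 3}

def U : Finset (DihedralGroup 9) :=
  {r 0, r 2, r 5, r 6, r 8, sr 0, sr 2, sr 5, sr 6, sr 8}

theorem inv_mem_S : ∀ s ∈ (S : Set (DihedralGroup 9)), s⁻¹ ∈ (S : Set (DihedralGroup 9)) := by
  simp only [Finset.mem_coe]
  decide

theorem one_notMem_S : (1 : DihedralGroup 9) ∉ (S : Set (DihedralGroup 9)) := by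
  rw [Finset.mem_coe]
  decide

theorem closure_S : Subgroup.closure (S : Set (DihedralGroup 9)) = ⊤ :=
  top_le_iff.mp <| closure_sr_zero_sr_one 9 ▸
    Subgroup.closure_mono (by simp [S, Set.insert_subset_iff])

theorem ncard_S : (S : Set (DihedralGroup 9)).ncard = 3 := by
  rw [Set.ncard_coe_finset]
  decide

theorem card_lt_two_mul_ncard_U :
    Nat.card (DihedralGroup 9) < 2 * (U : Set (DihedralGroup 9)).ncard := by
  rw [Set.ncard_coe_finset, nat_card]
  decide

theorem ncard_neighbors_U_le_one (g : DihedralGroup 9) (hg : g ∈ (U : Set (DihedralGroup 9))) :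
    {h ∈ (U : Set (DihedralGroup 9)) | (cayley _ (S : Set (DihedralGroup 9))).Adj g h}.ncard ≤ 1 := by
  have hmatching : ∀ g ∈ U, (U.filter (fun h => g⁻¹ * h ∈ S)).card ≤ 1 := by decide
  have hneighbors : {h ∈ (U : Set (DihedralGroup 9)) | (cayley _ (S : Set (DihedralGroup 9))).Adj g h}
      = ↑(U.filter (fun h => g⁻¹ * h ∈ S)) := by
    ext h
    simp [cayley_adj_iff inv_mem_S one_notMem_S]
  rw [hneighbors, Set.ncard_coe_finset]
  exact hmatching g hg

end CayleyCounterexample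

/-- There is no function `f : ℕ → ℝ` with `f d > 1` for all `d ≥ 3` such that every
Cayley graph of valency `d` (i.e. with inverse-closed identity-free generating set of
size `d`) has the property that every induced subgraph on more than half of its vertices
has maximum degree at least `f d`: the Cayley graphs on iterated wreath products provide,
for infinitely many valencies `d`, `d`-valent counterexamples with an induced subgraph of
maximum degree at most 1 on more than half the vertices. -/
theorem no_lower_bound_function :
    ¬ ∃ f : ℕ → ℝ, (∀ d : ℕ, 3 ≤ d → f d > 1) ∧
      ∀ (G : Type) (instG : Group G) (_ : Finite G) (S : Set G),
        (∀ s ∈ S, @Inv.inv G instG.toDivInvMonoid.toInv s ∈ S) →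
        (1 : G) ∉ S →
        @Subgroup.closure G instG S = ⊤ →
        3 ≤ S.ncard →
        ∀ U : Set G, 2 * U.ncard > Nat.card G →
          ∃ g ∈ U, (f S.ncard : ℝ) ≤ ({h ∈ U | (@cayley G instG S).Adj g h}).ncard := by
  rintro ⟨f, hf, H⟩
  open CayleyCounterexample in
  obtain ⟨g, hg, hfg⟩ := H (DihedralGroup 9) inferInstance inferInstance S inv_mem_S one_notMem_S
    closure_S ncard_S.ge U card_lt_two_mul_ncard_U
  rw [CayleyCounterexample.ncard_S] at hfg
  linarith [hf 3 le_rfl,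
    (Nat.cast_le_one (α := ℝ)).mpr (CayleyCounterexample.ncard_neighbors_U_le_one g hg)]
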